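/- arXiv:1807.04208 — 8 statements merged into one kernel-verified Lean document; each statement's English description precedes it below -/
import Mathlib

section
/- Let M = [[α, xᵀ],[y, B]] be a square matrix with α a scalar, x, y column vectors, and B a square matrix. Then rank(M) = rank(B) + 2 if and only if xᵀ is not in the row space of B and y is not in the column space of B. -/
/-!
`M` is `B` bordered first by the row `xᵀ` and then by the column `(α, y)`, or first by the column
`y` and then by the row `(α, xᵀ)`. Each bordering raises the rank by at most one, and by exactly
one iff the new row (column) lies outside the current row (column) space. A column `(α, y)` in
the column space of `[xᵀ; B]` has its lower part `y` in the column space of `B`.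
-/

open Matrix Module Submodule

theorem finrank_span_insert_of_mem {R M : Type*} [Semiring R] [AddCommMonoid M] [Module R M]
    {s : Set M} {v : M} (hv : v ∈ span R s) :
    finrank R (span R (insert v s)) = finrank R (span R s) := by
  rw [span_insert_eq_span hv]

section Span

variable {K V : Type*} [DivisionRing K] [AddCommGroup V] [Module K V] [Module.Finite K V]

theorem finrank_span_insert_of_notMem {s : Set V} {v : V} (hv : v ∉ span K s) :
    finrank K (span K (insert v s)) = finrank K (span K s) + 1 := by
  rw [span_insert, sup_comm, finrank_sup_span_singleton hv]

theorem finrank_span_insert_le (s : Set V) (v : V) :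
    finrank K (span K (insert v s)) ≤ finrank K (span K s) + 1 := by
  by_cases hv : v ∈ span K s
  · exact (finrank_span_insert_of_mem hv).trans_le (Nat.le_succ _)
  · exact (finrank_span_insert_of_notMem hv).le

end Span

namespace Matrix

theorem range_row_fromRows_replicateRow {α ι m n : Type*} [Nonempty ι] (v : n → α)
    (A : Matrix m n α) :
    Set.range (fromRows (replicateRow ι v) A).row = insert v (Set.range A) :=
  (Set.Sum.elim_range _ _).trans (congrArg (· ∪ _) Set.range_const)

theorem fromCols_replicateCol_eq_transpose {α ι m n : Type*} (w : m → α) (A : Matrix m n α) :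
    fromCols (replicateCol ι w) A = (fromRows (replicateRow ι w) Aᵀ)ᵀ := by
  rw [transpose_fromRows, transpose_replicateRow, transpose_transpose]

theorem mem_span_range_transpose_of_sumElim_mem {K m m' n : Type*} [CommSemiring K] [Fintype n]
    (A' : Matrix m' n K) (A : Matrix m n K) {a : m' → K} {w : m → K}
    (h : Sum.elim a w ∈ span K (Set.range (fromRows A' A)ᵀ)) :
    w ∈ span K (Set.range Aᵀ) := by
  change _ ∈ span K (Set.range (fromRows A' A).col) at h
  change _ ∈ span K (Set.range A.col)
  rw [← range_mulVecLin] at h ⊢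
  obtain ⟨u, hu⟩ := h
  rw [mulVecLin_apply, fromRows_mulVec] at hu
  exact ⟨u, funext fun i => congrFun hu (Sum.inr i)⟩

variable {K : Type*} [Field K] {ι m n : Type*} [Fintype ι] [Fintype m] [Fintype n] [Nonempty ι]

section Rows

variable (v : n → K) (A : Matrix m n K)

theorem rank_fromRows_replicateRow :
    (fromRows (replicateRow ι v) A).rank = finrank K (span K (insert v (Set.range A))) := by
  rw [rank_eq_finrank_span_row, range_row_fromRows_replicateRow]

theorem rank_fromRows_replicateRow_le : (fromRows (replicateRow ι v) A).rank ≤ A.rank + 1 := by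
  rw [rank_fromRows_replicateRow, rank_eq_finrank_span_row]
  exact finrank_span_insert_le _ _

variable {v A}

theorem rank_fromRows_replicateRow_of_mem (hv : v ∈ span K (Set.range A)) :
    (fromRows (replicateRow ι v) A).rank = A.rank := by
  rw [rank_fromRows_replicateRow, rank_eq_finrank_span_row, finrank_span_insert_of_mem hv]
  rfl

theorem rank_fromRows_replicateRow_of_notMem (hv : v ∉ span K (Set.range A)) :
    (fromRows (replicateRow ι v) A).rank = A.rank + 1 := by
  rw [rank_fromRows_replicateRow, rank_eq_finrank_span_row, finrank_span_insert_of_notMem hv]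
  rfl

end Rows

section Cols

variable (w : m → K) (A : Matrix m n K)

theorem rank_fromCols_replicateCol_le : (fromCols (replicateCol ι w) A).rank ≤ A.rank + 1 := by
  rw [fromCols_replicateCol_eq_transpose, rank_transpose, ← rank_transpose A]
  exact rank_fromRows_replicateRow_le w Aᵀ

variable {w A}

theorem rank_fromCols_replicateCol_of_mem (hw : w ∈ span K (Set.range Aᵀ)) :
    (fromCols (replicateCol ι w) A).rank = A.rank := by
  rw [fromCols_replicateCol_eq_transpose, rank_transpose, rank_fromRows_replicateRow_of_mem hw,
    rank_transpose]

theorem rank_fromCols_replicateCol_of_notMem (hw : w ∉ span K (Set.range Aᵀ)) :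
    (fromCols (replicateCol ι w) A).rank = A.rank + 1 := by
  rw [fromCols_replicateCol_eq_transpose, rank_transpose, rank_fromRows_replicateRow_of_notMem hw,
    rank_transpose]

end Cols

end Matrix

/-- rank(M) = rank(B) + 2 iff xᵀ ∉ rowspace(B) and y ∉ colspace(B). -/
theorem stmt_1 {F : Type*} [Field F] {m : ℕ}
    (B : Matrix (Fin m) (Fin m) F) (x y : Fin m → F) (α : F)
    (M : Matrix (Fin 1 ⊕ Fin m) (Fin 1 ⊕ Fin m) F)
    (hM : M = Matrix.fromBlocks (Matrix.of fun _ _ => α) (Matrix.of fun _ j => x j)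
      (Matrix.of fun i _ => y i) B) :
    M.rank = B.rank + 2 ↔
      x ∉ Submodule.span F (Set.range B) ∧ y ∉ Submodule.span F (Set.range Bᵀ) := by
  have hcols : M = fromCols (replicateCol (Fin 1) (Sum.elim (fun _ => α) y))
      (fromRows (replicateRow (Fin 1) x) B) := by
    subst hM; ext (i | i) (j | j) <;> rfl
  have hrows : M = fromRows (replicateRow (Fin 1) (Sum.elim (fun _ => α) x))
      (fromCols (replicateCol (Fin 1) y) B) := by
    subst hM; ext (i | i) (j | j) <;> rfl
  constructor
  · intro hrank
    refine ⟨fun hx => ?_, fun hy => ?_⟩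
    · have := rank_fromCols_replicateCol_le (ι := Fin 1) (Sum.elim (fun _ => α) y)
        (fromRows (replicateRow (Fin 1) x) B)
      rw [← hcols, rank_fromRows_replicateRow_of_mem hx] at this
      omega
    · have := rank_fromRows_replicateRow_le (ι := Fin 1) (Sum.elim (fun _ => α) x)
        (fromCols (replicateCol (Fin 1) y) B)
      rw [← hrows, rank_fromCols_replicateCol_of_mem hy] at this
      omega
  · rintro ⟨hx, hy⟩
    rw [hcols, rank_fromCols_replicateCol_of_notMem
      (mt (mem_span_range_transpose_of_sumElim_mem _ B) hy),
      rank_fromRows_replicateRow_of_notMem hx]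
end

section
/- Let M = [[α, xᵀ],[y, B]] be a square matrix with α a scalar, x, y column vectors, and B a square matrix. Then rank(M) = rank(B) if and only if the column vector (α, y) is in the column space of the matrix [xᵀ; B] (the matrix with first row xᵀ stacked above B) and the row vector (α, xᵀ) is in the row space of the matrix [y, B] (the matrix with first column y adjoined to B). -/
open Matrix Module Submodule Set

/-! Bordering a matrix by a row (or a column) never lowers its rank, and keeps it iff the new
row lies in the old row space. Since `M` borders both `N` and `P`, which both border `B`,
`rank M = rank B` forces `rank M = rank N = rank P`, i.e. the two membership conditions.
Conversely, restricting `(α, xᵀ)`, a vector of the row space of `P`, to its last `m` coordinates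
puts `xᵀ` in the row space of `B`, so `rank M = rank N = rank B`. -/

namespace Matrix

variable {F : Type*} [Field F] {m m₁ m₂ n n₁ n₂ : Type*}

theorem rank_eq_finrank_span_range [Finite m] [Fintype n] (A : Matrix m n F) :
    A.rank = finrank F (span F (range A)) :=
  A.rank_eq_finrank_span_row

theorem span_range_fromRows (A₁ : Matrix m₁ n F) (A₂ : Matrix m₂ n F) :
    span F (range (fromRows A₁ A₂)) = span F (range A₁) ⊔ span F (range A₂) :=
  (congrArg (span F) (Sum.elim_range (A₁ : m₁ → n → F) A₂)).trans (span_union _ _)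

theorem mem_span_range_of_sumElim_mem_span_range_fromCols {A₁ : Matrix m n₁ F}
    {A₂ : Matrix m n₂ F} {r₁ : n₁ → F} {r₂ : n₂ → F}
    (h : Sum.elim r₁ r₂ ∈ span F (range (fromCols A₁ A₂))) : r₂ ∈ span F (range A₂) := by
  have := mem_map_of_mem (f := LinearMap.funLeft F F (Sum.inr : n₂ → n₁ ⊕ n₂)) h
  rwa [map_span, ← range_comp (g := LinearMap.funLeft F F Sum.inr)
    (f := (fromCols A₁ A₂ : m → n₁ ⊕ n₂ → F))] at this

variable [Finite m₁] [Finite m₂] [Fintype n]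

theorem rank_le_rank_fromRows_right (A₁ : Matrix m₁ n F) (A₂ : Matrix m₂ n F) :
    A₂.rank ≤ (fromRows A₁ A₂).rank := by
  rw [rank_eq_finrank_span_range, rank_eq_finrank_span_range, span_range_fromRows]
  exact Submodule.finrank_mono le_sup_right

theorem rank_fromRows_eq_rank_right_iff (A₁ : Matrix m₁ n F) (A₂ : Matrix m₂ n F) :
    (fromRows A₁ A₂).rank = A₂.rank ↔ ∀ i, A₁ i ∈ span F (range A₂) := by
  rw [rank_eq_finrank_span_range, rank_eq_finrank_span_range, span_range_fromRows]
  refine ⟨fun h i => ?_, fun h => ?_⟩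
  · have hsup := eq_of_le_of_finrank_eq le_sup_right h.symm
    exact (le_sup_left.trans hsup.ge) (subset_span (mem_range_self i))
  · rw [sup_eq_right.mpr (span_le.mpr (range_subset_iff.mpr h))]

variable [Fintype n₁] [Fintype n₂]

theorem rank_le_rank_fromCols_right (A₁ : Matrix n n₁ F) (A₂ : Matrix n n₂ F) :
    A₂.rank ≤ (fromCols A₁ A₂).rank := by
  rw [← rank_transpose, ← rank_transpose (fromCols _ _), transpose_fromCols]
  exact rank_le_rank_fromRows_right _ _

theorem rank_fromCols_eq_rank_right_iff (A₁ : Matrix n n₁ F) (A₂ : Matrix n n₂ F) :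
    (fromCols A₁ A₂).rank = A₂.rank ↔ ∀ j, A₁ᵀ j ∈ span F (range A₂ᵀ) := by
  rw [← rank_transpose, ← rank_transpose A₂, transpose_fromCols]
  exact rank_fromRows_eq_rank_right_iff _ _

end Matrix

/-- rank(M) = rank(B) iff (α,y) ∈ colspace([xᵀ;B]) and (α,xᵀ) ∈ rowspace([y,B]). -/
theorem stmt_2 {F : Type*} [Field F] {m : ℕ}
    (B : Matrix (Fin m) (Fin m) F) (x y : Fin m → F) (α : F)
    (M : Matrix (Fin 1 ⊕ Fin m) (Fin 1 ⊕ Fin m) F)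
    (hM : M = Matrix.fromBlocks (Matrix.of fun _ _ => α) (Matrix.of fun _ j => x j)
      (Matrix.of fun i _ => y i) B)
    -- [xᵀ; B] : the matrix with first row xᵀ stacked above B
    (N : Matrix (Fin 1 ⊕ Fin m) (Fin m) F)
    (hN : N = Matrix.of (Sum.elim (fun _ => x) B))
    -- [y, B] : the matrix with first column y adjoined to B
    (P : Matrix (Fin m) (Fin 1 ⊕ Fin m) F)
    (hP : P = Matrix.of fun i => Sum.elim (fun _ => y i) (B i)) :
    M.rank = B.rank ↔
      (Sum.elim (fun _ => α) y) ∈ Submodule.span F (Set.range Nᵀ) ∧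
      (Sum.elim (fun _ => α) x) ∈ Submodule.span F (Set.range P) := by
  set v : Fin 1 ⊕ Fin m → F := Sum.elim (fun _ => α) y
  set w : Fin 1 ⊕ Fin m → F := Sum.elim (fun _ => α) x
  have hN_rows : N = fromRows (of fun _ => x) B := hN
  have hP_cols : P = fromCols (of fun i _ => y i) B := hP
  have hMN : M = fromCols (of fun i _ => v i) N := by
    subst hM hN_rows; ext (i | i) (j | j) <;> rfl
  have hMP : M = fromRows (of fun _ => w) P := by
    subst hM hP_cols; ext (i | i) (j | j) <;> rfl
  have hv : v ∈ span F (range Nᵀ) ↔ M.rank = N.rank := by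
    rw [hMN, rank_fromCols_eq_rank_right_iff, Unique.forall_iff]; rfl
  have hw : w ∈ span F (range P) ↔ M.rank = P.rank := by
    rw [hMP, rank_fromRows_eq_rank_right_iff, Unique.forall_iff]; rfl
  have hB_N : B.rank ≤ N.rank := hN_rows ▸ rank_le_rank_fromRows_right _ _
  have hB_P : B.rank ≤ P.rank := hP_cols ▸ rank_le_rank_fromCols_right _ _
  have hN_M : N.rank ≤ M.rank := hMN ▸ rank_le_rank_fromCols_right _ _
  have hP_M : P.rank ≤ M.rank := hMP ▸ rank_le_rank_fromRows_right _ _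
  constructor
  · intro h
    exact ⟨hv.mpr (by omega), hw.mpr (by omega)⟩
  · rintro ⟨hv_mem, hw_mem⟩
    have hx : x ∈ span F (range B) :=
      mem_span_range_of_sumElim_mem_span_range_fromCols (hP_cols ▸ hw_mem)
    have hNB : N.rank = B.rank := by
      rw [hN_rows, rank_fromRows_eq_rank_right_iff, Unique.forall_iff]; exact hx
    have hMN_rank := hv.mp hv_mem
    omega
end

section
/- Whether rank([[α, xᵀ],[y, B]]) = rank(B) + 2 holds does not depend on the scalar α: if it holds for some α ∈ F, then it holds for every α ∈ F. -/
/-!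
If some `u ∈ ker B` has `x ⬝ u ≠ 0`, scale it so that `x ⬝ u = 1`; then right multiplication
by the unipotent matrix `[[1, 0], [(β - α) u, 1]]` adds `(β - α) (x ⬝ u, B u) = (β - α, 0)` to the first column, turning `M(α)` into `M(β)`, so
the rank of `M(α)` does not depend on `α`. Otherwise `u ↦ (0, u)` embeds `ker B` into
`ker M(α)`, and rank–nullity gives `rank M(α) ≤ rank B + 1` for every `α`.
-/

open Matrix

namespace Matrix

variable {F : Type*} [Field F] {m n : Type*} [Fintype n]

def borderedMatrix (α : F) (x : n → F) (y : m → F) (B : Matrix m n F) :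
    Matrix (Fin 1 ⊕ m) (Fin 1 ⊕ n) F :=
  fromBlocks (of fun _ _ => α) (of fun _ j => x j) (of fun i _ => y i) B

lemma borderedMatrix_mulVec_elim_zero (α : F) (x : n → F) (y : m → F) (B : Matrix m n F)
    (u : n → F) :
    borderedMatrix α x y B *ᵥ Sum.elim 0 u = Sum.elim (fun _ => x ⬝ᵥ u) (B *ᵥ u) := by
  ext (i | i) <;> simp [borderedMatrix, mulVec, dotProduct]

lemma borderedMatrix_mul_shear [DecidableEq n] {α : F} {x : n → F} (y : m → F)
    {B : Matrix m n F} {u : n → F} (hBu : B *ᵥ u = 0) (hxu : x ⬝ᵥ u = 1) (c : F) :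
    borderedMatrix α x y B *
        (fromBlocks 1 0 (of fun i _ => c * u i) 1 : Matrix (Fin 1 ⊕ n) (Fin 1 ⊕ n) F) =
      borderedMatrix (α + c) x y B := by
  have hBu' : ∀ i, ∑ j, B i j * u j = 0 := congrFun hBu
  have hxu' : ∑ j, x j * u j = 1 := hxu
  rw [borderedMatrix, borderedMatrix, fromBlocks_multiply]
  congr 1 <;> ext i j
  all_goals simp [mul_apply, mul_left_comm _ c, ← Finset.mul_sum, hBu', hxu']

lemma rank_borderedMatrix_eq_of_mulVec_eq_zero [DecidableEq n] {x : n → F} (y : m → F)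
    {B : Matrix m n F} {u : n → F} (hBu : B *ᵥ u = 0) (hxu : x ⬝ᵥ u ≠ 0) (α β : F) :
    (borderedMatrix α x y B).rank = (borderedMatrix β x y B).rank := by
  set v := (x ⬝ᵥ u)⁻¹ • u
  have hBv : B *ᵥ v = 0 := by simp [v, mulVec_smul, hBu]
  have hxv : x ⬝ᵥ v = 1 := by simp [v, dotProduct_smul, inv_mul_cancel₀ hxu]
  have hdet : IsUnit
      (fromBlocks 1 0 (of fun i _ => (β - α) * v i) 1 : Matrix (Fin 1 ⊕ n) (Fin 1 ⊕ n) F).det := by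
    simp
  rw [← rank_mul_eq_left_of_isUnit_det _ _ hdet, borderedMatrix_mul_shear y hBv hxv,
    add_sub_cancel]

lemma rank_borderedMatrix_le_rank_add_one (α : F) {x : n → F} (y : m → F) {B : Matrix m n F}
    (hx : ∀ u, B *ᵥ u = 0 → x ⬝ᵥ u = 0) :
    (borderedMatrix α x y B).rank ≤ B.rank + 1 := by
  let extendByZero : (n → F) →ₗ[F] (Fin 1 ⊕ n → F) :=
    (LinearEquiv.sumArrowLequivProdArrow (Fin 1) n F F).symm.toLinearMap ∘ₗ
      LinearMap.inr F (Fin 1 → F) (n → F)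
  have hker : ∀ u ∈ LinearMap.ker B.mulVecLin,
      extendByZero u ∈ LinearMap.ker (borderedMatrix α x y B).mulVecLin := by
    intro u hu
    have hu : B *ᵥ u = 0 := hu
    change borderedMatrix α x y B *ᵥ Sum.elim 0 u = 0
    rw [borderedMatrix_mulVec_elim_zero, hu, hx u hu]
    exact Sum.elim_zero_zero
  have hinj : Function.Injective (extendByZero.restrict hker) := fun u v huv =>
    Subtype.ext <| LinearMap.inr_injective <|
      (LinearEquiv.sumArrowLequivProdArrow (Fin 1) n F F).symm.injective <|
      congrArg Subtype.val huv
  have hle := LinearMap.finrank_le_finrank_of_injective hinj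
  have hB := LinearMap.finrank_range_add_finrank_ker B.mulVecLin
  have hM := LinearMap.finrank_range_add_finrank_ker (borderedMatrix α x y B).mulVecLin
  simp only [Module.finrank_fintype_fun_eq_card, Fintype.card_sum, Fintype.card_fin] at hB hM
  unfold Matrix.rank
  omega

end Matrix

/-- whether rank(M(α)) = rank(B) + 2 does not depend on α. -/
theorem stmt_6 {F : Type*} [Field F] {m : ℕ}
    (B : Matrix (Fin m) (Fin m) F) (x y : Fin m → F)
    (M : F → Matrix (Fin 1 ⊕ Fin m) (Fin 1 ⊕ Fin m) F)
    (hM : ∀ α, M α = Matrix.fromBlocks (Matrix.of fun _ _ => α) (Matrix.of fun _ j => x j)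
      (Matrix.of fun i _ => y i) B)
    (h : ∃ α : F, (M α).rank = B.rank + 2) :
    ∀ α : F, (M α).rank = B.rank + 2 := by
  change ∀ α, M α = borderedMatrix α x y B at hM
  obtain ⟨α₀, h₀⟩ := h
  by_cases hx : ∀ u, B *ᵥ u = 0 → x ⬝ᵥ u = 0
  · have := rank_borderedMatrix_le_rank_add_one α₀ y hx
    rw [hM] at h₀
    omega
  · push Not at hx
    obtain ⟨u, hBu, hxu⟩ := hx
    intro α
    rw [hM, rank_borderedMatrix_eq_of_mulVec_eq_zero y hBu hxu α α₀, ← hM, h₀]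
end

section
/- Consider the block matrix A(α) = [[B, x, O],[yᵀ, α, wᵀ],[Oᵀ, z, C]] where B, C are square matrices and O zero blocks. If x is in the column space of B, yᵀ is in the row space of B, and z is not in the column space of C, then rank(A(α)) = rank(B) + rank([[0, wᵀ],[z, C]]), independent of α. -/
/-
Writing `x = B u` and `yᵀ = vᵀ B`, block row and column operations with unit triangular matrices
clear `x` and `yᵀ` and reduce `A(α)` to `diag(B, D_β)`, where `D_β = [[β, wᵀ], [z, C]]` and
`β = α - yᵀ u`. As `z` is not in the column space of `C`, some `λ` has `λᵀ C = 0` and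
`λᵀ z = β`; subtracting `λᵀ` times the lower rows from the top row of `D_β` turns it into `D`.
-/

theorem LinearMap.finrank_range_prodMap {K M₁ M₂ N₁ N₂ : Type*} [DivisionRing K]
    [AddCommGroup M₁] [Module K M₁] [AddCommGroup M₂] [Module K M₂]
    [AddCommGroup N₁] [Module K N₁] [AddCommGroup N₂] [Module K N₂]
    [FiniteDimensional K N₁] [FiniteDimensional K N₂]
    (f : M₁ →ₗ[K] N₁) (g : M₂ →ₗ[K] N₂) :
    Module.finrank K (LinearMap.range (f.prodMap g)) =
      Module.finrank K (LinearMap.range f) + Module.finrank K (LinearMap.range g) := by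
  have hfactor : f.prodMap g =
      ((LinearMap.range f).subtype.prodMap (LinearMap.range g).subtype) ∘ₗ
        (f.rangeRestrict.prodMap g.rangeRestrict) := by
    ext <;> rfl
  rw [hfactor, LinearMap.range_comp_of_range_eq_top, LinearMap.finrank_range_of_inj,
    Module.finrank_prod]
  · exact Prod.map_injective.mpr ⟨Subtype.val_injective, Subtype.val_injective⟩
  · rw [LinearMap.range_prodMap, LinearMap.range_rangeRestrict, LinearMap.range_rangeRestrict,
      Submodule.prod_top]

namespace Matrix

variable {R K : Type*} [CommRing R] [Field K]

theorem rank_fromBlocks_zero_zero {m₁ m₂ n₁ n₂ : Type*}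
    [Fintype m₁] [Fintype m₂] [Fintype n₁] [Fintype n₂]
    (B : Matrix m₁ n₁ K) (D : Matrix m₂ n₂ K) :
    (fromBlocks B 0 0 D).rank = B.rank + D.rank := by
  let eₙ := LinearEquiv.sumArrowLequivProdArrow n₁ n₂ K K
  let eₘ := LinearEquiv.sumArrowLequivProdArrow m₁ m₂ K K
  have hconj : (fromBlocks B 0 0 D).mulVecLin =
      eₘ.symm.toLinearMap ∘ₗ (B.mulVecLin.prodMap D.mulVecLin) ∘ₗ eₙ.toLinearMap := by
    ext v (i | i) <;> simp [eₘ, eₙ, fromBlocks_mulVec] <;> rfl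
  rw [rank, hconj, LinearMap.range_comp, LinearMap.range_comp_of_range_eq_top _ eₙ.range,
    eₘ.symm.finrank_map_eq, LinearMap.finrank_range_prodMap, rank, rank]

theorem rank_fromBlocks_mul_mul {m n p q : Type*} [Fintype m] [Fintype n] [Fintype p] [Fintype q]
    [DecidableEq m] [DecidableEq n] [DecidableEq p] [DecidableEq q]
    (B : Matrix m n K) (M : Matrix p m K) (N : Matrix n q K) (E : Matrix p q K) :
    (fromBlocks B (B * N) (M * B) E).rank = B.rank + (E - M * B * N).rank := by
  have hfactor : fromBlocks B (B * N) (M * B) E =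
      fromBlocks (1 : Matrix m m K) 0 M (1 : Matrix p p K) * fromBlocks B 0 0 (E - M * B * N) *
        fromBlocks (1 : Matrix n n K) N 0 (1 : Matrix q q K) := by
    simp [fromBlocks_multiply, Matrix.mul_assoc]
  have hL : IsUnit (fromBlocks (1 : Matrix m m K) 0 M 1).det := by simp
  have hR : IsUnit (fromBlocks (1 : Matrix n n K) N 0 1).det := by simp
  rw [hfactor, rank_mul_eq_left_of_isUnit_det _ _ hR, rank_mul_eq_right_of_isUnit_det _ _ hL,
    rank_fromBlocks_zero_zero]

theorem rank_fromBlocks_add_mul_of_mul_eq_zero {l m n o : Type*}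
    [Fintype l] [Fintype m] [Fintype n] [Fintype o] [DecidableEq l] [DecidableEq m]
    (P : Matrix m n R) (W : Matrix m o R) (Z : Matrix l n R) (C : Matrix l o R)
    (Λ : Matrix m l R) (hΛ : Λ * C = 0) :
    (fromBlocks (P + Λ * Z) W Z C).rank = (fromBlocks P W Z C).rank := by
  have hrowop : fromBlocks (1 : Matrix m m R) Λ 0 (1 : Matrix l l R) * fromBlocks P W Z C =
      fromBlocks (P + Λ * Z) W Z C := by
    simp [fromBlocks_multiply, hΛ]
  rw [← hrowop, rank_mul_eq_right_of_isUnit_det]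
  simp

theorem exists_vecMul_eq_zero_and_dotProduct_eq {m n : Type*} [Fintype m] [DecidableEq m]
    {C : Matrix m n K} {z : m → K} (hz : z ∉ Submodule.span K (Set.range Cᵀ)) (t : K) :
    ∃ l : m → K, l ᵥ* C = 0 ∧ l ⬝ᵥ z = t := by
  obtain ⟨f, hfz, hf⟩ := Submodule.exists_dual_map_eq_bot_of_notMem hz inferInstance
  set l₀ := (dotProductEquiv K m).symm f
  have hl₀ : ∀ v, l₀ ⬝ᵥ v = f v := fun v ↦
    LinearMap.congr_fun ((dotProductEquiv K m).apply_symm_apply f) v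
  refine ⟨(t / f z) • l₀, ?_, ?_⟩
  · ext j
    have hcol : f (Cᵀ j) = 0 :=
      LinearMap.le_ker_iff_map.mpr hf (Submodule.subset_span ⟨j, rfl⟩)
    change (t / f z) • l₀ ⬝ᵥ Cᵀ j = 0
    rw [smul_dotProduct, hl₀, hcol, smul_zero]
  · rw [smul_dotProduct, hl₀, smul_eq_mul, div_mul_cancel₀ _ hfz]

end Matrix

open Matrix

/-- A(α) = [[B, x, 0],[yᵀ, α, wᵀ],[0, z, C]]. If x ∈ colspace(B),
yᵀ ∈ rowspace(B), and z ∉ colspace(C), then rank(A(α)) = rank(B) + rank([[0, wᵀ],[z, C]]),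
independent of α. -/
theorem stmt_9 {F : Type*} [Field F] {m k : ℕ}
    (B : Matrix (Fin m) (Fin m) F) (C : Matrix (Fin k) (Fin k) F)
    (x y : Fin m → F) (w z : Fin k → F)
    (A : F → Matrix (Fin m ⊕ (Fin 1 ⊕ Fin k)) (Fin m ⊕ (Fin 1 ⊕ Fin k)) F)
    (D : Matrix (Fin 1 ⊕ Fin k) (Fin 1 ⊕ Fin k) F)
    (hD : D = Matrix.fromBlocks (Matrix.of fun (_ : Fin 1) (_ : Fin 1) => (0 : F))
      (Matrix.of fun (_ : Fin 1) j => w j) (Matrix.of fun i (_ : Fin 1) => z i) C)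
    (hA : ∀ α : F, A α = Matrix.fromBlocks B
      (Matrix.of fun i j => Sum.elim (fun (_ : Fin 1) => x i) (fun (_ : Fin k) => (0 : F)) j)
      (Matrix.of fun i j => Sum.elim (fun (_ : Fin 1) => y j) (fun (_ : Fin k) => (0 : F)) i)
      (Matrix.fromBlocks (Matrix.of fun (_ : Fin 1) (_ : Fin 1) => α)
        (Matrix.of fun (_ : Fin 1) j => w j) (Matrix.of fun i (_ : Fin 1) => z i) C))
    (hx : x ∈ Submodule.span F (Set.range Bᵀ))
    (hy : y ∈ Submodule.span F (Set.range B))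
    (hz : z ∉ Submodule.span F (Set.range Cᵀ)) :
    ∀ α : F, (A α).rank = B.rank + D.rank := by
  intro α
  obtain ⟨u, rfl⟩ : x ∈ LinearMap.range B.mulVecLin := by rwa [range_mulVecLin]
  obtain ⟨v, rfl⟩ : y ∈ LinearMap.range B.vecMulLinear := by rwa [range_vecMulLinear]
  obtain ⟨l, hlC, hlz⟩ :=
    exists_vecMul_eq_zero_and_dotProduct_eq hz (α - (v ᵥ* B) ⬝ᵥ u)
  let N : Matrix (Fin m) (Fin 1 ⊕ Fin k) F := of fun i j => Sum.elim (fun _ => u i) 0 j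
  let M : Matrix (Fin 1 ⊕ Fin k) (Fin m) F := of fun i j => Sum.elim (fun _ => v j) 0 i
  have hAα : A α = fromBlocks B (B * N) (M * B) (fromBlocks (of fun _ _ => α)
      (of fun _ j => w j) (of fun i _ => z i) C) := by
    rw [hA]
    congr 1
    · ext i (j | j) <;> simp [N, mul_apply, mulVec, dotProduct]
    · ext (i | i) j <;> simp [M, mul_apply, vecMul, dotProduct]
  have hschur : fromBlocks (of fun _ _ => α) (of fun _ j => w j) (of fun i _ => z i) C - M * B * N
      = fromBlocks (of (fun _ _ => 0) + of (fun _ j => l j) * of fun i _ => z i)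
          (of fun _ j => w j) (of fun i _ => z i) C := by
    ext (i | i) (j | j) <;> simp [M, N, mul_apply]
    simpa [dotProduct, vecMul] using hlz.symm
  rw [hAα, rank_fromBlocks_mul_mul, hschur, rank_fromBlocks_add_mul_of_mul_eq_zero, hD]
  ext _ j
  exact congrFun hlC j
end

section
/- Consider the block matrix A = [[B, x, O],[yᵀ, α, wᵀ],[Oᵀ, z, C]] with B, C square and O zero blocks. Suppose x is in the column space of B but yᵀ is not in the row space of B. If z is in the column space of C, then rank(A) = rank(B) + rank(C) + 1; if z is not in the column space of C, then rank(A) = rank(B) + rank(C) + 2. -/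
/-!
Since `x = B u`, the block `(x 0)` above the last `1 + k` columns is `B` times a matrix, so a
column operation with unit determinant clears it. The middle row `(yᵀ, α, wᵀ)` is not in the span
of the other rows, because its first block `yᵀ` is not in the row space of `B`; it therefore adds
exactly one to the rank. What remains is block diagonal with blocks `B` and `D = (z C)`, and
`rank D` is `rank C` or `rank C + 1` according as `z` does or does not lie in the column space
of `C`.
-/

open Matrix Module Submodule Set

namespace Matrix

variable {F : Type*} [Field F] {m n k l ι : Type*}

theorem range_fromRows {R : Type*} (P : Matrix m n R) (Q : Matrix k n R) :
    range (fromRows P Q) = range P ∪ range Q :=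
  Set.Sum.elim_range P Q

theorem mem_span_range_iff_exists_vecMul [Fintype m] (M : Matrix m n F) {v : n → F} :
    v ∈ span F (range M) ↔ ∃ a, a ᵥ* M = v := by
  rw [show range M = range M.row from rfl, ← range_vecMulLinear]
  rfl

theorem rank_fromRows_of_disjoint [Fintype m] [Fintype k] [Fintype n] (P : Matrix m n F)
    (Q : Matrix k n F) (h : Disjoint (span F (range P)) (span F (range Q))) :
    (fromRows P Q).rank = P.rank + Q.rank := by
  have := Submodule.finrank_sup_add_finrank_inf_eq (span F (range P)) (span F (range Q))
  rw [h.eq_bot, finrank_bot, add_zero, ← span_union, ← range_fromRows] at this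
  simp only [rank_eq_finrank_span_row]
  exact this

theorem rank_fromRows_fromRows_comm [Fintype m] [Fintype l] [Fintype k] [Fintype n]
    (P : Matrix m n F) (R : Matrix l n F) (Q : Matrix k n F) :
    (fromRows P (fromRows R Q)).rank = (fromRows R (fromRows P Q)).rank := by
  simp only [rank_eq_finrank_span_row]
  unfold row
  rw [range_fromRows, range_fromRows, range_fromRows, range_fromRows, Set.union_left_comm]

theorem span_range_fromRows_replicateRow [Nonempty ι] (v : n → F) (P : Matrix m n F) :
    span F (range (fromRows (replicateRow ι v) P)) = span F (range P) ⊔ F ∙ v := by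
  rw [range_fromRows, span_union, sup_comm]
  congr
  exact Set.range_const

theorem rank_fromRows_replicateRow_of_mem_s10 [Fintype ι] [Nonempty ι] [Fintype m] [Fintype n]
    {v : n → F} {P : Matrix m n F} (hv : v ∈ span F (range P)) :
    (fromRows (replicateRow ι v) P).rank = P.rank := by
  rw [rank_eq_finrank_span_row, rank_eq_finrank_span_row, row, row,
    span_range_fromRows_replicateRow, sup_eq_left.2 ((span_singleton_le_iff_mem _ _).2 hv)]

theorem rank_fromRows_replicateRow_of_notMem_s10 [Fintype ι] [Nonempty ι] [Fintype m] [Fintype n]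
    {v : n → F} {P : Matrix m n F} (hv : v ∉ span F (range P)) :
    (fromRows (replicateRow ι v) P).rank = P.rank + 1 := by
  rw [rank_eq_finrank_span_row, rank_eq_finrank_span_row, row, row,
    span_range_fromRows_replicateRow, finrank_sup_span_singleton hv]

theorem rank_fromCols_replicateCol_of_mem_s10 [Fintype ι] [Nonempty ι] [Fintype m] [Fintype n]
    {z : m → F} {C : Matrix m n F} (hz : z ∈ span F (range Cᵀ)) :
    (fromCols (replicateCol ι z) C).rank = C.rank := by
  rw [← rank_transpose, transpose_fromCols, transpose_replicateCol,
    rank_fromRows_replicateRow_of_mem_s10 hz, rank_transpose]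

theorem rank_fromCols_replicateCol_of_notMem_s10 [Fintype ι] [Nonempty ι] [Fintype m] [Fintype n]
    {z : m → F} {C : Matrix m n F} (hz : z ∉ span F (range Cᵀ)) :
    (fromCols (replicateCol ι z) C).rank = C.rank + 1 := by
  rw [← rank_transpose, transpose_fromCols, transpose_replicateCol,
    rank_fromRows_replicateRow_of_notMem_s10 hz, rank_transpose]

theorem rank_fromCols_zero_right [Fintype n] [Fintype l] [DecidableEq n] (P : Matrix m n F) :
    (fromCols P (0 : Matrix m l F)).rank = P.rank := by
  refine le_antisymm ?_ ?_
  · simpa [mul_fromCols] using rank_mul_le_left P (fromCols (1 : Matrix n n F) (0 : Matrix n l F))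
  · simpa [fromCols_mul_fromRows] using
      rank_mul_le_left (fromCols P (0 : Matrix m l F)) (fromRows (1 : Matrix n n F) 0)

theorem rank_fromCols_zero_left [Fintype n] [Fintype l] [DecidableEq n] (Q : Matrix m n F) :
    (fromCols (0 : Matrix m l F) Q).rank = Q.rank := by
  refine le_antisymm ?_ ?_
  · simpa [mul_fromCols] using rank_mul_le_left Q (fromCols (0 : Matrix n l F) (1 : Matrix n n F))
  · simpa [fromCols_mul_fromRows] using
      rank_mul_le_left (fromCols (0 : Matrix m l F) Q) (fromRows 0 (1 : Matrix n n F))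

theorem disjoint_span_range_fromCols_zero [Fintype m] [Fintype k] (P : Matrix m n F)
    (Q : Matrix k l F) :
    Disjoint (span F (range (fromCols P (0 : Matrix m l F))))
      (span F (range (fromCols (0 : Matrix k n F) Q))) := by
  simp only [disjoint_def, mem_span_range_iff_exists_vecMul]
  rintro _ ⟨a, rfl⟩ ⟨b, hb⟩
  ext (i | j)
  · simpa using (congrFun hb (Sum.inl i)).symm
  · simp

theorem rank_fromBlocks_zero_zero_s10 [Fintype m] [Fintype k] [Fintype n] [Fintype l]
    [DecidableEq n] [DecidableEq l] (P : Matrix m n F) (Q : Matrix k l F) :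
    (fromBlocks P 0 0 Q).rank = P.rank + Q.rank := by
  rw [← fromRows_fromCols_eq_fromBlocks, rank_fromRows_of_disjoint _ _
    (disjoint_span_range_fromCols_zero P Q), rank_fromCols_zero_right, rank_fromCols_zero_left]

theorem rank_fromBlocks_self_mul_zero [Fintype n] [Fintype l] [DecidableEq n] [DecidableEq l]
    (P : Matrix m n F) (U : Matrix n l F) (Q : Matrix k l F) :
    (fromBlocks P (P * U) 0 Q).rank = (fromBlocks P 0 0 Q).rank := by
  have hdet : IsUnit (fromBlocks 1 (-U) 0 1 : Matrix (n ⊕ l) (n ⊕ l) F).det := by simp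
  rw [← rank_mul_eq_left_of_isUnit_det _ _ hdet, fromBlocks_multiply]
  simp [Matrix.mul_neg]

theorem comp_inl_mem_span_of_mem_span_fromBlocks [Fintype m] [Fintype k] {P : Matrix m n F}
    {X : Matrix m l F} {Q : Matrix k l F} {v : n ⊕ l → F}
    (hv : v ∈ span F (range (fromBlocks P X 0 Q))) : v ∘ Sum.inl ∈ span F (range P) := by
  rw [mem_span_range_iff_exists_vecMul] at hv ⊢
  obtain ⟨a, rfl⟩ := hv
  exact ⟨a ∘ Sum.inl, by simp [vecMul_fromBlocks]⟩

end Matrix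

/-- A = [[B, x, 0],[yᵀ, α, wᵀ],[0, z, C]]. Suppose x ∈ colspace(B) but
yᵀ ∉ rowspace(B). If z ∈ colspace(C) then rank(A) = rank(B) + rank(C) + 1; if
z ∉ colspace(C) then rank(A) = rank(B) + rank(C) + 2. -/
theorem stmt_10 {F : Type*} [Field F] {m k : ℕ}
    (B : Matrix (Fin m) (Fin m) F) (C : Matrix (Fin k) (Fin k) F)
    (x y : Fin m → F) (w z : Fin k → F) (α : F)
    (A : Matrix (Fin m ⊕ (Fin 1 ⊕ Fin k)) (Fin m ⊕ (Fin 1 ⊕ Fin k)) F)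
    (hA : A = Matrix.fromBlocks B
      (Matrix.of fun i j => Sum.elim (fun (_ : Fin 1) => x i) (fun (_ : Fin k) => (0 : F)) j)
      (Matrix.of fun i j => Sum.elim (fun (_ : Fin 1) => y j) (fun (_ : Fin k) => (0 : F)) i)
      (Matrix.fromBlocks (Matrix.of fun (_ : Fin 1) (_ : Fin 1) => α)
        (Matrix.of fun (_ : Fin 1) j => w j) (Matrix.of fun i (_ : Fin 1) => z i) C))
    (hx : x ∈ Submodule.span F (Set.range Bᵀ))
    (hy : y ∉ Submodule.span F (Set.range B)) :
    (z ∈ Submodule.span F (Set.range Cᵀ) → A.rank = B.rank + C.rank + 1) ∧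
    (z ∉ Submodule.span F (Set.range Cᵀ) → A.rank = B.rank + C.rank + 2) := by
  obtain ⟨u, hu⟩ := (mem_span_range_iff_exists_vecMul Bᵀ).1 hx
  rw [vecMul_transpose] at hu
  set D := fromCols (replicateCol (Fin 1) z) C
  set r : Fin m ⊕ (Fin 1 ⊕ Fin k) → F := Sum.elim y (Sum.elim (fun _ => α) w)
  have hA_rows : A = fromRows (fromCols B (B * fromCols (replicateCol (Fin 1) u) 0))
      (fromRows (replicateRow (Fin 1) r) (fromCols 0 D)) := by
    rw [mul_fromCols, ← replicateCol_mulVec, hu, Matrix.mul_zero, hA]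
    ext (i | i | i) (j | j | j) <;> simp [D, r]
  have hrank : A.rank = B.rank + D.rank + 1 := by
    rw [hA_rows, rank_fromRows_fromRows_comm, fromRows_fromCols_eq_fromBlocks,
      rank_fromRows_replicateRow_of_notMem_s10
        (fun h => hy (comp_inl_mem_span_of_mem_span_fromBlocks h)),
      rank_fromBlocks_self_mul_zero, rank_fromBlocks_zero_zero_s10]
  refine ⟨fun hz => ?_, fun hz => ?_⟩
  · rw [hrank, rank_fromCols_replicateCol_of_mem_s10 hz]
  · rw [hrank, rank_fromCols_replicateCol_of_notMem_s10 hz]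
    ring
end

section
/- Let A be an n×n matrix over a field and S a set of m indices. If rank(A) equals rank of the principal submatrix obtained by deleting all rows and columns of S plus 2m, then for every subset T ⊆ S, rank(A) equals rank of the principal submatrix obtained by deleting the rows and columns of T plus 2|T|. -/
/-!
Deleting k rows of a matrix lowers its rank by at most k (the row projection has a
k-dimensional kernel), so deleting k rows and the matching k columns lowers it by at most 2k.
If T ⊆ S, pass from A to A(S) through A(T): the drop from A to A(S) is 2|S| and is the sum of
the drops A → A(T) and A(T) → A(S), which are at most 2|T| and 2|S \ T|, so both bounds are
attained.
-/

open Matrix Module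

theorem Submodule.finrank_le_finrank_map_add_finrank_ker {K V W : Type*} [DivisionRing K]
    [AddCommGroup V] [Module K V] [AddCommGroup W] [Module K W] [FiniteDimensional K V]
    (f : V →ₗ[K] W) (U : Submodule K V) :
    finrank K U ≤ finrank K (U.map f) + finrank K (LinearMap.ker f) := by
  have hker : finrank K ((LinearMap.ker f).comap U.subtype) ≤ finrank K (LinearMap.ker f) :=
    (Submodule.finrank_map_subtype_eq _ _).symm.trans_le
      (Submodule.finrank_mono (Submodule.map_comap_le _ _))
  have := (f.domRestrict U).finrank_range_add_finrank_ker
  rw [LinearMap.range_domRestrict, LinearMap.ker_domRestrict] at this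
  omega

namespace Matrix

variable {K m n p : Type*} [Field K] [Fintype m] [Fintype n] [Fintype p]

theorem rank_add_card_le_rank_submatrix_add_card (A : Matrix m n K) {f : p → m}
    (hf : Function.Injective f) :
    A.rank + Fintype.card p ≤ (A.submatrix f id).rank + Fintype.card m := by
  set π := LinearMap.funLeft K K f
  have hπ : LinearMap.range π = ⊤ :=
    LinearMap.range_eq_top.mpr (LinearMap.funLeft_surjective_of_injective K K f hf)
  have hker : Fintype.card p + finrank K (LinearMap.ker π) = Fintype.card m := by
    have h := π.finrank_range_add_finrank_ker
    rw [hπ] at h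
    simpa using h
  have hrows : (A.submatrix f id).rank = finrank K ((LinearMap.range A.mulVecLin).map π) := by
    rw [rank, ← LinearMap.range_comp]
    rfl
  have := (LinearMap.range A.mulVecLin).finrank_le_finrank_map_add_finrank_ker π
  rw [rank, hrows]
  omega

theorem rank_add_two_mul_card_le_rank_submatrix_add_two_mul_card (A : Matrix m m K) {f : p → m}
    (hf : Function.Injective f) :
    A.rank + 2 * Fintype.card p ≤ (A.submatrix f f).rank + 2 * Fintype.card m := by
  have hrows := A.rank_add_card_le_rank_submatrix_add_card hf
  have hcols := (A.submatrix f id)ᵀ.rank_add_card_le_rank_submatrix_add_card hf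
  rw [rank_transpose, ← transpose_submatrix, rank_transpose, submatrix_submatrix,
    Function.comp_id, Function.id_comp] at hcols
  omega

end Matrix

theorem Fintype.card_subtype_notMem_add_card {ι : Type*} [Fintype ι] [DecidableEq ι]
    (T : Finset ι) : Fintype.card {i : ι // i ∉ T} + T.card = Fintype.card ι := by
  rw [Fintype.card_subtype_compl, Fintype.card_coe]
  have := T.card_le_univ
  omega

/-- if rank(A) = rank(A(S)) + 2|S| then for every T ⊆ S,
rank(A) = rank(A(T)) + 2|T|, where A(T) is the principal submatrix deleting the
rows and columns indexed by T. -/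
theorem stmt_13 {F : Type*} [Field F] {ι : Type*} [Fintype ι] [DecidableEq ι]
    (A : Matrix ι ι F) (S : Finset ι)
    (hS : A.rank =
      (A.submatrix (fun i : {i : ι // i ∉ S} => i.val) (fun i : {i : ι // i ∉ S} => i.val)).rank
        + 2 * S.card) :
    ∀ T ⊆ S, A.rank =
      (A.submatrix (fun i : {i : ι // i ∉ T} => i.val) (fun i : {i : ι // i ∉ T} => i.val)).rank
        + 2 * T.card := by
  intro T hT
  set AT := A.submatrix (fun i : {i : ι // i ∉ T} => i.val) (fun i : {i : ι // i ∉ T} => i.val)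
  set AS := A.submatrix (fun i : {i : ι // i ∉ S} => i.val) (fun i : {i : ι // i ∉ S} => i.val)
  let incl : {i : ι // i ∉ S} → {i : ι // i ∉ T} := fun i => ⟨i, fun h => i.2 (hT h)⟩
  have hincl : Function.Injective incl := fun _ _ h => Subtype.ext (Subtype.mk.inj h)
  have hAT : A.rank + 2 * Fintype.card {i // i ∉ T} ≤ AT.rank + 2 * Fintype.card ι :=
    A.rank_add_two_mul_card_le_rank_submatrix_add_two_mul_card Subtype.val_injective
  have hATS :
      AT.rank + 2 * Fintype.card {i // i ∉ S} ≤ AS.rank + 2 * Fintype.card {i // i ∉ T} := by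
    have h := AT.rank_add_two_mul_card_le_rank_submatrix_add_two_mul_card hincl
    rwa [submatrix_submatrix] at h
  have hcardT := Fintype.card_subtype_notMem_add_card T
  have hcardS := Fintype.card_subtype_notMem_add_card S
  omega
end

section
/- If a bipartite graph on n vertices has a nonsingular adjacency matrix, then deleting any single vertex decreases the rank of the adjacency matrix by exactly 2. -/
/-!
Grouping the two colour classes puts the adjacency matrix of a bipartite graph in the form
`[0, B; Bᵀ, 0]`, so its rank `2 * rank B` is even, and the same holds after deleting a vertex.
Deleting a row and a column lowers the rank by at most two, and `A ∖ v` has size `n - 1`, so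
`rank (A ∖ v) ∈ {n - 2, n - 1}` when `A` is nonsingular; parity rules out `n - 1`.
-/

open Matrix Module

theorem Submodule.finrank_prod {K M N : Type*} [Field K] [AddCommGroup M] [AddCommGroup N]
    [Module K M] [Module K N] [FiniteDimensional K M] [FiniteDimensional K N]
    (p : Submodule K M) (q : Submodule K N) :
    finrank K (p.prod q) = finrank K p + finrank K q := by
  have h := LinearMap.finrank_range_of_inj (f := p.subtype.prodMap q.subtype)
    (Subtype.val_injective.prodMap Subtype.val_injective)
  rwa [LinearMap.range_prodMap, Submodule.range_subtype, Submodule.range_subtype,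
    Module.finrank_prod] at h

theorem Matrix.rank_fromBlocks_zero₁₁_zero₂₂ {K m n o p : Type*} [Field K] [Fintype n]
    [Fintype p] [Finite m] [Finite o] (B : Matrix m p K) (C : Matrix o n K) :
    (fromBlocks 0 B C 0).rank = B.rank + C.rank := by
  let E : ((n ⊕ p) → K) ≃ₗ[K] (p → K) × (n → K) :=
    LinearEquiv.sumArrowLequivProdArrow n p K K ≪≫ₗ LinearEquiv.prodComm K (n → K) (p → K)
  have hmul : (fromBlocks 0 B C 0).mulVecLin =
      (LinearEquiv.sumArrowLequivProdArrow m o K K).symm.toLinearMap ∘ₗ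
        B.mulVecLin.prodMap C.mulVecLin ∘ₗ E.toLinearMap := by
    ext x (i | i) <;> simp [E, fromBlocks_mulVec] <;> rfl
  rw [Matrix.rank, hmul, LinearMap.range_comp, LinearMap.range_comp_of_range_eq_top _ E.range,
    LinearEquiv.finrank_map_eq, LinearMap.range_prodMap, Submodule.finrank_prod]
  rfl

theorem Matrix.rank_le_rank_submatrix_ne_add_one {K m n : Type*} [Field K] [Fintype m]
    [Fintype n] [DecidableEq n] (A : Matrix m n K) (v : n) :
    A.rank ≤ (A.submatrix id ((↑) : {u // u ≠ v} → n)).rank + 1 := by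
  set S := A.submatrix id ((↑) : {u // u ≠ v} → n)
  have hcols : Set.range A.col ⊆ Set.range S.col ∪ {A.col v} := by
    rintro _ ⟨u, rfl⟩
    by_cases h : u = v
    · exact Or.inr (h ▸ rfl)
    · exact Or.inl ⟨⟨u, h⟩, rfl⟩
  rw [rank_eq_finrank_span_cols, rank_eq_finrank_span_cols]
  calc finrank K (Submodule.span K (Set.range A.col))
      ≤ finrank K ↥(Submodule.span K (Set.range S.col) ⊔ K ∙ A.col v) := by
        rw [← Submodule.span_union]; exact Submodule.finrank_mono (Submodule.span_mono hcols)
    _ ≤ finrank K (Submodule.span K (Set.range S.col)) + finrank K (K ∙ A.col v) :=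
        Submodule.finrank_add_le_finrank_add_finrank _ _
    _ ≤ _ := by
        gcongr
        simpa using finrank_span_le_card ({A.col v} : Set (m → K))

theorem Matrix.rank_le_rank_submatrix_ne_ne_add_two {K n : Type*} [Field K] [Fintype n]
    [DecidableEq n] (A : Matrix n n K) (v : n) :
    A.rank ≤ (A.submatrix ((↑) : {u // u ≠ v} → n) ((↑) : {u // u ≠ v} → n)).rank + 2 := by
  let f : {u // u ≠ v} → n := (↑)
  have hcol : A.rank ≤ (A.submatrix id f).rank + 1 := A.rank_le_rank_submatrix_ne_add_one v
  have hrow : (A.submatrix id f).rank ≤ (A.submatrix f f).rank + 1 := by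
    have h := (A.submatrix id f)ᵀ.rank_le_rank_submatrix_ne_add_one v
    rwa [rank_transpose, show (A.submatrix id f)ᵀ.submatrix id f = (A.submatrix f f)ᵀ from rfl,
      rank_transpose] at h
  show A.rank ≤ (A.submatrix f f).rank + 2
  omega

theorem Matrix.IsSymm.even_rank_of_coloring {K W : Type*} [Field K] [Fintype W]
    {M : Matrix W W K} (hM : M.IsSymm) (c : W → Fin 2) (hc : ∀ i j, c i = c j → M i j = 0) :
    Even M.rank := by
  let e : {w // c w = 0} ⊕ {w // c w ≠ 0} ≃ W := Equiv.sumCompl _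
  let B := M.submatrix (fun i : {w // c w = 0} => i.val) fun j : {w // c w ≠ 0} => j.val
  have hblocks : M.submatrix e e = Matrix.fromBlocks 0 B Bᵀ 0 := by
    ext (i | i) (j | j)
    · exact hc i j (i.2.trans j.2.symm)
    · rfl
    · exact hM.apply _ _
    · exact hc i j (Fin.ext (by have := i.2; have := j.2; omega))
  rw [← rank_submatrix M e e, hblocks, rank_fromBlocks_zero₁₁_zero₂₂, rank_transpose]
  exact ⟨B.rank, rfl⟩

theorem SimpleGraph.Coloring.adjMatrix_eq_zero {V α R : Type*} [Zero R] [One R]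
    {G : SimpleGraph V} [DecidableRel G.Adj] (col : G.Coloring α) {i j : V}
    (h : col i = col j) : G.adjMatrix R i j = 0 := by
  rw [SimpleGraph.adjMatrix_apply, if_neg fun hadj => col.valid hadj h]

/-- if a bipartite graph on n vertices has a nonsingular adjacency matrix,
then deleting any single vertex decreases the rank of the adjacency matrix by exactly 2. -/
theorem stmt_15 {V : Type*} [Fintype V] [DecidableEq V]
    (G : SimpleGraph V) [DecidableRel G.Adj]
    (hbip : G.Colorable 2)
    (hdet : (G.adjMatrix ℝ).det ≠ 0)
    (v : V) :
    ((G.adjMatrix ℝ).submatrix (fun u : {u : V // u ≠ v} => u.val)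
      (fun u : {u : V // u ≠ v} => u.val)).rank = Fintype.card V - 2 := by
  obtain ⟨col⟩ := hbip
  set A := G.adjMatrix ℝ
  set M := A.submatrix (fun u : {u : V // u ≠ v} => u.val) fun u : {u : V // u ≠ v} => u.val
  have hA : A.IsSymm := G.isSymm_adjMatrix
  have hrankA : A.rank = Fintype.card V := rank_of_det_ne_zero hdet
  have hevenA : Even A.rank := hA.even_rank_of_coloring col fun _ _ => col.adjMatrix_eq_zero
  have hevenM : Even M.rank :=
    (hA.submatrix _).even_rank_of_coloring (col ∘ Subtype.val) fun _ _ => col.adjMatrix_eq_zero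
  have hupper : M.rank ≤ Fintype.card V - 1 := by
    simpa using M.rank_le_card_width
  have hlower : A.rank ≤ M.rank + 2 := A.rank_le_rank_submatrix_ne_ne_add_two v
  obtain ⟨a, ha⟩ := hevenA
  obtain ⟨b, hb⟩ := hevenM
  omega
end

section
/- Let A = [[B, 0],[0, C]] be a block diagonal matrix with square blocks B and C, and let A' = [[α, xᵀ, wᵀ],[y, B, 0],[z, 0, C]] be obtained by bordering A with one extra row and column. If xᵀ is not in the row space of B and z is not in the column space of C, then rank(A') = rank(B) + rank(C) + 2. -/
open Matrix

section Aux

variable {K : Type*} [Field K]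

/-- Rank-nullity for a linear map restricted to a submodule. -/
lemma aux_finrank_map_add_inf_ker {V W : Type*} [AddCommGroup V] [Module K V]
    [AddCommGroup W] [Module K W] [FiniteDimensional K V]
    (f : V →ₗ[K] W) (p : Submodule K V) :
    Module.finrank K p
      = Module.finrank K (p.map f) + Module.finrank K ↥(p ⊓ LinearMap.ker f) := by
  have h := LinearMap.finrank_range_add_finrank_ker (f.domRestrict p)
  rw [LinearMap.range_domRestrict, LinearMap.ker_domRestrict] at h
  have e : Submodule.comap p.subtype (LinearMap.ker f)
      = Submodule.comap p.subtype (p ⊓ LinearMap.ker f) := by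
    ext v
    simp [v.2]
  rw [e, (Submodule.comapSubtypeEquivOfLe
    (inf_le_left : p ⊓ LinearMap.ker f ≤ p)).finrank_eq] at h
  exact h.symm

lemma aux_map_ker_comp {V W X : Type*} [AddCommGroup V] [Module K V]
    [AddCommGroup W] [Module K W] [AddCommGroup X] [Module K X]
    (f : V →ₗ[K] W) (g : W →ₗ[K] X) :
    (LinearMap.ker (g ∘ₗ f)).map f = LinearMap.range f ⊓ LinearMap.ker g := by
  ext v
  simp only [Submodule.mem_map, LinearMap.mem_ker, LinearMap.comp_apply,
    Submodule.mem_inf, LinearMap.mem_range]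
  constructor
  · rintro ⟨u, hu, rfl⟩
    exact ⟨⟨u, rfl⟩, hu⟩
  · rintro ⟨⟨u, rfl⟩, hv⟩
    exact ⟨u, hv, rfl⟩

/-- If the dot product of `x` with every element of the kernel of `B` vanishes,
then `x` lies in the row space of `B`. -/
lemma aux_mem_span_rows {m : Type*} [Fintype m] [DecidableEq m]
    (B : Matrix m m K) (x : m → K)
    (h : ∀ a, B *ᵥ a = 0 → x ⬝ᵥ a = 0) :
    x ∈ Submodule.span K (Set.range B) := by
  rw [← Subspace.forall_mem_dualAnnihilator_apply_eq_zero_iff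
    (Submodule.span K (Set.range B)) x]
  intro φ hφ
  set a : m → K := fun i => φ (Pi.single i 1) with ha
  have hrep : ∀ v : m → K, φ v = v ⬝ᵥ a := by
    intro v
    have hv : v = ∑ i, (v i) • (Pi.single i (1:K) : m → K) := by
      funext j
      simp [Finset.sum_apply, Pi.single_apply, mul_ite]
    have : φ v = ∑ i, v i * a i := by
      conv_lhs => rw [hv]
      rw [map_sum]
      simp [a, smul_eq_mul]
    simpa [dotProduct] using this
  have hBa : B *ᵥ a = 0 := by
    funext i
    have hrow : φ (B i) = 0 :=
      (Submodule.mem_dualAnnihilator φ).mp hφ (B i) (Submodule.subset_span ⟨i, rfl⟩)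
    rw [hrep] at hrow
    simpa [mulVec, dotProduct] using hrow
  rw [hrep]
  exact h a hBa

end Aux

/-- A = [[α, xᵀ, wᵀ],[y, B, 0],[z, 0, C]]. If xᵀ ∉ rowspace(B) and
z ∉ colspace(C) then rank(A) = rank(B) + rank(C) + 2. -/
theorem stmt_19 {F : Type*} [Field F] {m k : ℕ}
    (B : Matrix (Fin m) (Fin m) F) (C : Matrix (Fin k) (Fin k) F)
    (x y : Fin m → F) (w z : Fin k → F) (α : F)
    (A : Matrix (Fin 1 ⊕ (Fin m ⊕ Fin k)) (Fin 1 ⊕ (Fin m ⊕ Fin k)) F)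
    (hA : A = Matrix.fromBlocks (Matrix.of fun _ _ => α)
      (Matrix.of fun _ j => Sum.elim x w j)
      (Matrix.of fun i _ => Sum.elim y z i)
      (Matrix.fromBlocks B 0 0 C))
    (hx : x ∉ Submodule.span F (Set.range B))
    (hz : z ∉ Submodule.span F (Set.range Cᵀ)) :
    A.rank = B.rank + C.rank + 2 := by
  classical
  -- component computations
  have h_top : ∀ u : (Fin 1 ⊕ (Fin m ⊕ Fin k)) → F,
      (A *ᵥ u) (Sum.inl 0) = α * u (Sum.inl 0)
        + (x ⬝ᵥ fun j => u (Sum.inr (Sum.inl j)))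
        + (w ⬝ᵥ fun j => u (Sum.inr (Sum.inr j))) := by
    intro u
    rw [hA]
    simp [mulVec, dotProduct, Fintype.sum_sum_type]
    ring
  have h_mid : ∀ (u : (Fin 1 ⊕ (Fin m ⊕ Fin k)) → F) (i : Fin m),
      (A *ᵥ u) (Sum.inr (Sum.inl i)) = y i * u (Sum.inl 0)
        + (B *ᵥ fun j => u (Sum.inr (Sum.inl j))) i := by
    intro u i
    rw [hA]
    simp [mulVec, dotProduct, Fintype.sum_sum_type]
  have h_bot : ∀ (u : (Fin 1 ⊕ (Fin m ⊕ Fin k)) → F) (i : Fin k),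
      (A *ᵥ u) (Sum.inr (Sum.inr i)) = u (Sum.inl 0) * z i
        + (C *ᵥ fun j => u (Sum.inr (Sum.inr j))) i := by
    intro u i
    rw [hA]
    simp [mulVec, dotProduct, Fintype.sum_sum_type, mul_comm]
  -- witnesses from the hypotheses
  have hz' : z ∉ LinearMap.range C.mulVecLin := by rwa [Matrix.range_mulVecLin]
  have hz0 : z ≠ 0 := fun h => hz' (h ▸ Submodule.zero_mem _)
  have hzC : ∀ (c : F) (v : Fin k → F), c • z + C *ᵥ v = 0 → c = 0 ∧ C *ᵥ v = 0 := by
    intro c v hcv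
    have hc : c = 0 := by
      by_contra hc
      have h1 : c • z = -(C *ᵥ v) := by rwa [eq_neg_iff_add_eq_zero]
      have h2 : z = c⁻¹ • -(C *ᵥ v) := by
        rw [← h1, smul_smul, inv_mul_cancel₀ hc, one_smul]
      exact hz' (h2 ▸ Submodule.smul_mem _ _ (Submodule.neg_mem _ ⟨v, rfl⟩))
    refine ⟨hc, ?_⟩
    simpa [hc] using hcv
  obtain ⟨a, haB, hxa⟩ : ∃ a, B *ᵥ a = 0 ∧ x ⬝ᵥ a ≠ 0 := by
    by_contra hcon
    push_neg at hcon
    exact hx (aux_mem_span_rows B x fun a ha => hcon a ha)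
  -- the projections and the maps
  set π₁ : ((Fin 1 ⊕ (Fin m ⊕ Fin k)) → F) →ₗ[F] (Fin m → F) :=
    LinearMap.funLeft F F (fun i => Sum.inr (Sum.inl i)) with hπ₁
  set π₂ : ((Fin 1 ⊕ (Fin m ⊕ Fin k)) → F) →ₗ[F] (Fin k → F) :=
    LinearMap.funLeft F F (fun i => Sum.inr (Sum.inr i)) with hπ₂
  set f := A.mulVecLin with hf
  set g := π₂ ∘ₗ f with hgdef
  have hπ₁app : ∀ (v : (Fin 1 ⊕ (Fin m ⊕ Fin k)) → F) (i : Fin m),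
      π₁ v i = v (Sum.inr (Sum.inl i)) := fun v i => rfl
  have hπ₂app : ∀ (v : (Fin 1 ⊕ (Fin m ⊕ Fin k)) → F) (i : Fin k),
      π₂ v i = v (Sum.inr (Sum.inr i)) := fun v i => rfl
  have hg : ∀ u, g u = u (Sum.inl 0) • z + C *ᵥ (fun j => u (Sum.inr (Sum.inr j))) := by
    intro u
    funext i
    rw [hgdef, LinearMap.comp_apply, hπ₂app]
    show (A *ᵥ u) (Sum.inr (Sum.inr i)) = _
    rw [h_bot u i]
    simp [smul_eq_mul]
  have hK : ∀ u ∈ LinearMap.ker g,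
      u (Sum.inl 0) = 0 ∧ C *ᵥ (fun j => u (Sum.inr (Sum.inr j))) = 0 := by
    intro u hu
    exact hzC _ _ (by rw [← hg u]; exact hu)
  -- range of g
  have hrg : LinearMap.range g = Submodule.span F {z} ⊔ LinearMap.range C.mulVecLin := by
    apply le_antisymm
    · rintro v ⟨u, rfl⟩
      rw [hg u]
      exact Submodule.add_mem _
        (Submodule.mem_sup_left (Submodule.smul_mem _ _ (Submodule.subset_span rfl)))
        (Submodule.mem_sup_right ⟨_, rfl⟩)
    · apply sup_le
      · rw [Submodule.span_le, Set.singleton_subset_iff]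
        refine ⟨Pi.single (Sum.inl 0) 1, ?_⟩
        rw [hg]
        simp [Pi.single_apply]
        exact Matrix.mulVec_zero C
      · rintro v ⟨b, rfl⟩
        refine ⟨Sum.elim 0 (Sum.elim 0 b), ?_⟩
        rw [hg]
        simp
  have hfin_g : Module.finrank F (LinearMap.range g) = C.rank + 1 := by
    have hdisj : Disjoint (Submodule.span F {z}) (LinearMap.range C.mulVecLin) := by
      rw [Submodule.disjoint_def]
      intro v hv1 hv2
      obtain ⟨c, rfl⟩ := Submodule.mem_span_singleton.mp hv1
      rcases eq_or_ne c 0 with rfl | hc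
      · simp
      · exact absurd (by simpa [smul_smul, inv_mul_cancel₀ hc] using
          Submodule.smul_mem _ c⁻¹ hv2) hz'
    have hsum := Submodule.finrank_sup_add_finrank_inf_eq
      (Submodule.span F {z}) (LinearMap.range C.mulVecLin)
    rw [hdisj.eq_bot, finrank_bot, add_zero, finrank_span_singleton hz0] at hsum
    have hrC : C.rank = Module.finrank F (LinearMap.range C.mulVecLin) := rfl
    rw [hrg, hsum, hrC]
    omega
  -- the subspace T = range f ⊓ ker π₂
  set T := (LinearMap.ker g).map f with hTdef
  have hT2 : LinearMap.range f ⊓ LinearMap.ker π₂ = T := (aux_map_ker_comp f π₂).symm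
  have hTmap : T.map π₁ = LinearMap.range B.mulVecLin := by
    apply le_antisymm
    · rintro v ⟨v', ⟨u, hu, rfl⟩, rfl⟩
      obtain ⟨hu0, huC⟩ := hK u hu
      refine ⟨fun j => u (Sum.inr (Sum.inl j)), ?_⟩
      funext i
      rw [Matrix.mulVecLin_apply, hπ₁app]
      show (B *ᵥ fun j => u (Sum.inr (Sum.inl j))) i = (A *ᵥ u) (Sum.inr (Sum.inl i))
      rw [h_mid u i, hu0, mul_zero, zero_add]
    · rintro v ⟨b, rfl⟩
      refine ⟨f (Sum.elim 0 (Sum.elim b 0)), ⟨Sum.elim 0 (Sum.elim b 0), ?_, rfl⟩, ?_⟩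
      · show g _ = 0
        rw [hg]
        simp
        exact Matrix.mulVec_zero C
      · funext i
        rw [hπ₁app]
        show (A *ᵥ _) (Sum.inr (Sum.inl i)) = (B *ᵥ b) i
        rw [h_mid]
        simp
  -- T ⊓ ker π₁ is the line spanned by e₀
  set e₀ : (Fin 1 ⊕ (Fin m ⊕ Fin k)) → F := Pi.single (Sum.inl 0) 1 with he₀
  have he₀0 : e₀ ≠ 0 := by
    intro h
    have := congrFun h (Sum.inl 0)
    simp [he₀] at this
  have hTinf : T ⊓ LinearMap.ker π₁ = Submodule.span F {e₀} := by
    apply le_antisymm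
    · rintro v ⟨⟨u, hu, rfl⟩, hv1⟩
      obtain ⟨hu0, huC⟩ := hK u hu
      have hBu : (B *ᵥ fun j => u (Sum.inr (Sum.inl j))) = 0 := by
        funext i
        have h2 : π₁ (f u) i = 0 := by rw [LinearMap.mem_ker.mp hv1]; rfl
        rw [hπ₁app] at h2
        have h3 := h_mid u i
        rw [hu0, mul_zero, zero_add] at h3
        show (B *ᵥ fun j => u (Sum.inr (Sum.inl j))) i = (0 : Fin m → F) i
        rw [← h3]
        exact h2
      have hv : f u = (f u) (Sum.inl 0) • e₀ := by
        funext j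
        rcases j with j0 | j'
        · have hj0 : j0 = 0 := Subsingleton.elim _ _
          subst hj0
          simp [he₀]
        · rcases j' with i | i
          · show (A *ᵥ u) (Sum.inr (Sum.inl i)) = _
            rw [h_mid u i, hu0, mul_zero, zero_add]
            have := congrFun hBu i
            simp only [Pi.zero_apply] at this
            rw [this]
            simp [he₀, Pi.single_apply]
          · show (A *ᵥ u) (Sum.inr (Sum.inr i)) = _
            rw [h_bot u i, hu0, zero_mul, zero_add]
            have := congrFun huC i
            simp only [Pi.zero_apply] at this
            rw [this]
            simp [he₀, Pi.single_apply]
      rw [hv]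
      exact Submodule.smul_mem _ _ (Submodule.subset_span rfl)
    · rw [Submodule.span_le, Set.singleton_subset_iff]
      rw [SetLike.mem_coe, Submodule.mem_inf]
      constructor
      · refine ⟨Sum.elim 0 (Sum.elim ((x ⬝ᵥ a)⁻¹ • a) 0), ?_, ?_⟩
        · show g _ = 0
          rw [hg]
          simp
          exact Matrix.mulVec_zero C
        · funext j
          rcases j with j0 | j'
          · have hj0 : j0 = 0 := Subsingleton.elim _ _
            subst hj0
            show (A *ᵥ _) (Sum.inl 0) = e₀ (Sum.inl 0)
            rw [h_top]
            simp [he₀]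
            rw [show (fun j => (x ⬝ᵥ a)⁻¹ * a j) = (x ⬝ᵥ a)⁻¹ • a from rfl,
              dotProduct_smul, smul_eq_mul, inv_mul_cancel₀ hxa]
          · rcases j' with i | i
            · show (A *ᵥ _) (Sum.inr (Sum.inl i)) = e₀ (Sum.inr (Sum.inl i))
              rw [h_mid]
              simp [he₀]
              rw [show (fun j => (x ⬝ᵥ a)⁻¹ * a j) = (x ⬝ᵥ a)⁻¹ • a from rfl,
                Matrix.mulVec_smul, haB]
              simp
            · show (A *ᵥ _) (Sum.inr (Sum.inr i)) = e₀ (Sum.inr (Sum.inr i))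
              rw [h_bot]
              simp [he₀]
              exact congrFun (Matrix.mulVec_zero C) i
      · rw [LinearMap.mem_ker]
        funext i
        rw [hπ₁app]
        simp [he₀, Pi.single_apply]
  have hfinT : Module.finrank F ↥T = B.rank + 1 := by
    have h := aux_finrank_map_add_inf_ker π₁ T
    rw [hTmap, hTinf, finrank_span_singleton he₀0] at h
    have hrB : B.rank = Module.finrank F (LinearMap.range B.mulVecLin) := rfl
    rw [h, hrB]
  -- putting it together
  have hmain := aux_finrank_map_add_inf_ker π₂ (LinearMap.range f)
  rw [← LinearMap.range_comp, ← hgdef, hT2, hfin_g, hfinT] at hmain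
  have hrA : A.rank = Module.finrank F (LinearMap.range f) := by
    rw [Matrix.rank]
  rw [hrA, hmain]
  omega
end
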